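/- arXiv:1912.03912 — 6 statements merged into one kernel-verified Lean document; each statement's English description precedes it below -/
import Mathlib

section
/- Let n ≥ 7 and let p, q be positive integers with (p,q) satisfying condition (★) for n. Then the n×n block matrix B = [[C_p, E_{11}],[0, C_q]] (where E_{11} is the p×q matrix with a single 1 in position (1,1)) has stable index exactly g(n) = pq: the powers B, B², …, B^{pq} are all 0-1 matrices, and B^{pq+1} is not a 0-1 matrix. -/
/-- A matrix over ℕ is a 0-1 matrix iff all its entries are at most 1. -/
def IsZO {α β : Type*} (A : Matrix α β ℕ) : Prop := ∀ i j, A i j ≤ 1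

/-- The stable index of a 0-1 matrix: the smallest positive `k` with `A ^ (k+1)`
not a 0-1 matrix, or `⊤` if no such `k` exists. -/
noncomputable def theta {α : Type*} [Fintype α] [DecidableEq α]
    (A : Matrix α α ℕ) : ℕ∞ :=
  sInf ((fun k : ℕ => (k : ℕ∞)) '' {k : ℕ | 1 ≤ k ∧ ¬ IsZO (A ^ (k + 1))})

/-- `g(n)` from the paper. -/
def g (n : ℕ) : ℕ :=
  if n % 2 = 1 then (n ^ 2 - 1) / 4
  else if n % 4 = 0 then (n ^ 2 - 4) / 4
  else (n ^ 2 - 16) / 4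

/-- Basic circulant 0-1 matrix of order `n`. -/
def Cmat (n : ℕ) : Matrix (Fin n) (Fin n) ℕ :=
  Matrix.of fun i j => if (j : ℕ) = ((i : ℕ) + 1) % n then 1 else 0

/-- Condition (★) on `(n, p, q)`. -/
def StarCond (n p q : ℕ) : Prop :=
  p + q = n ∧
  ((n % 2 = 1 ∧ ({p, q} : Finset ℕ) = {(n + 1) / 2, (n - 1) / 2}) ∨
   (n % 4 = 0 ∧ ({p, q} : Finset ℕ) = {(n + 2) / 2, (n - 2) / 2}) ∨
   (n % 4 = 2 ∧ ({p, q} : Finset ℕ) = {(n + 4) / 2, (n - 4) / 2}))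

lemma Cmat_pow (p : ℕ) (hp : 0 < p) (a : ℕ) (i j : Fin p) :
    (Cmat p ^ a) i j = if (j : ℕ) = ((i : ℕ) + a) % p then 1 else 0 := by
  induction a generalizing j with
  | zero =>
    simp only [pow_zero, Matrix.one_apply, Nat.add_zero, Nat.mod_eq_of_lt i.isLt]
    simp [Fin.ext_iff, eq_comm]
  | succ a ih =>
    rw [pow_succ, Matrix.mul_apply]
    rw [Finset.sum_eq_single (⟨((i:ℕ)+a)%p, Nat.mod_lt _ hp⟩ : Fin p)]
    · rw [ih]
      simp only [Cmat, Matrix.of_apply]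
      rw [if_pos trivial, one_mul, Nat.mod_add_mod, ← Nat.add_assoc]
    · intro k _ hk
      rw [ih, if_neg, zero_mul]
      intro h
      exact hk (Fin.ext h)
    · intro h; exact absurd (Finset.mem_univ _) h

lemma triple_apply {p q : ℕ} (i0 : Fin p) (j0 : Fin q)
    (A : Matrix (Fin p) (Fin p) ℕ) (D : Matrix (Fin q) (Fin q) ℕ) (i : Fin p) (j : Fin q) :
    (((A * Matrix.single i0 j0 1 : Matrix (Fin p) (Fin q) ℕ) * D
      : Matrix (Fin p) (Fin q) ℕ)) i j = A i i0 * D j0 j := by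
  simp only [Matrix.mul_apply, Matrix.single, Matrix.of_apply, Finset.sum_mul, mul_ite,
    ite_mul, mul_zero, zero_mul, mul_one, one_mul]
  have h1 : ∀ x : Fin q, (∑ x1 : Fin p, if i0 = x1 ∧ j0 = x then A i x1 * D x j else 0)
      = if j0 = x then A i i0 * D x j else 0 := by
    intro x
    by_cases h : j0 = x <;> simp [h, Finset.sum_ite_eq, Finset.sum_ite_eq']
  simp only [h1, Finset.sum_ite_eq, Finset.mem_univ, if_true]

lemma fromBlocks_pow {p q : ℕ} (A : Matrix (Fin p) (Fin p) ℕ) (B : Matrix (Fin p) (Fin q) ℕ)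
    (D : Matrix (Fin q) (Fin q) ℕ) (m : ℕ) :
    (Matrix.fromBlocks A B 0 D) ^ m =
      Matrix.fromBlocks (A ^ m) (∑ k ∈ Finset.range m, A ^ k * B * D ^ (m - 1 - k)) 0 (D ^ m) := by
  induction m with
  | zero => simp [Matrix.fromBlocks_one]
  | succ m ih =>
    rw [pow_succ, ih, Matrix.fromBlocks_multiply]
    simp only [Matrix.mul_zero, Matrix.zero_mul, add_zero, zero_add]
    rw [← pow_succ, ← pow_succ]
    refine Matrix.fromBlocks_inj.mpr ⟨rfl, ?_, rfl, rfl⟩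
    have hms : ∀ k, m + 1 - 1 - k = m - k := fun k => by omega
    rw [Matrix.sum_mul, Finset.sum_range_succ]
    simp only [hms, Nat.sub_self, pow_zero, Matrix.mul_one]
    have hsum : ∀ k ∈ Finset.range m, A ^ k * B * D ^ (m - 1 - k) * D = A ^ k * B * D ^ (m - k) := by
      intro k hk
      rw [Matrix.mul_assoc, ← pow_succ]
      have : m - 1 - k + 1 = m - k := by
        have := Finset.mem_range.mp hk; omega
      rw [this]
    rw [Finset.sum_congr rfl hsum, add_comm (∑ k ∈ Finset.range m, A ^ k * B * D ^ (m - k)) (A ^ m * B)]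

lemma S_apply (p q : ℕ) (hp : 0 < p) (hq : 0 < q) (m : ℕ) (i : Fin p) (j : Fin q) :
    (∑ k ∈ Finset.range m, (Cmat p ^ k *
        Matrix.single (⟨0, hp⟩ : Fin p) (⟨0, hq⟩ : Fin q) 1 * Cmat q ^ (m - 1 - k)
        : Matrix (Fin p) (Fin q) ℕ)) i j
      = ((Finset.range m).filter
          (fun k => ((i : ℕ) + k) % p = 0 ∧ (j : ℕ) = (m - 1 - k) % q)).card := by
  rw [Matrix.sum_apply]
  have h1 : ∀ k ∈ Finset.range m,
      ((Cmat p ^ k * Matrix.single (⟨0, hp⟩ : Fin p) (⟨0, hq⟩ : Fin q) 1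
        * Cmat q ^ (m - 1 - k) : Matrix (Fin p) (Fin q) ℕ)) i j
      = if ((i : ℕ) + k) % p = 0 ∧ (j : ℕ) = (m - 1 - k) % q then 1 else 0 := by
    intro k _
    rw [triple_apply, Cmat_pow p hp, Cmat_pow q hq]
    by_cases hc1 : ((i : ℕ) + k) % p = 0 <;>
      by_cases hc2 : (j : ℕ) = (m - 1 - k) % q <;>
        simp [hc1, hc2, eq_comm]
  rw [Finset.sum_congr rfl h1, Finset.sum_boole]
  simp

lemma key_unique (p q m : ℕ) (hco : Nat.Coprime p q) (hm : m ≤ p * q)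
    (i jv : ℕ) {k1 k2 : ℕ} (h1 : k1 < m) (h2 : k2 < m) (hle : k1 ≤ k2)
    (c1 : (i + k1) % p = 0) (c2 : (i + k2) % p = 0)
    (d1 : jv = (m - 1 - k1) % q) (d2 : jv = (m - 1 - k2) % q) : k1 = k2 := by
  have hpd : p ∣ k2 - k1 := by
    have hd := Nat.dvd_sub (Nat.dvd_of_mod_eq_zero c2) (Nat.dvd_of_mod_eq_zero c1)
    have he : (i + k2) - (i + k1) = k2 - k1 := by omega
    rwa [he] at hd
  have hqd : q ∣ k2 - k1 := by
    have hmq : (m - 1 - k2) % q = (m - 1 - k1) % q := by rw [← d2, d1]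
    have hd := (Nat.modEq_iff_dvd' (show m - 1 - k2 ≤ m - 1 - k1 by omega)).mp hmq
    have he : (m - 1 - k1) - (m - 1 - k2) = k2 - k1 := by omega
    rwa [he] at hd
  have hmul := Nat.Coprime.mul_dvd_of_dvd_of_dvd hco hpd hqd
  have := Nat.eq_zero_of_dvd_of_lt hmul (by omega : k2 - k1 < p * q)
  · omega

lemma coprime_odd_add_two (a : ℕ) (h : a % 2 = 1) : Nat.Coprime a (a + 2) := by
  rw [add_comm, Nat.coprime_add_self_right]
  exact Nat.coprime_two_right.mpr (Nat.odd_iff.mpr h)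

lemma coprime_odd_add_four (a : ℕ) (h : a % 2 = 1) : Nat.Coprime a (a + 4) := by
  rw [add_comm, Nat.coprime_add_self_right]
  have h2 : Nat.Coprime a 2 := Nat.coprime_two_right.mpr (Nat.odd_iff.mpr h)
  have := h2.pow_right 2
  norm_num at this
  exact this

lemma pair_cases {p q a b : ℕ} (h : ({p, q} : Finset ℕ) = {a, b}) :
    (p = a ∧ q = b) ∨ (p = b ∧ q = a) := by
  have hp : p ∈ ({a, b} : Finset ℕ) := by rw [← h]; simp
  have hq : q ∈ ({a, b} : Finset ℕ) := by rw [← h]; simp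
  have ha : a ∈ ({p, q} : Finset ℕ) := by rw [h]; simp
  have hb : b ∈ ({p, q} : Finset ℕ) := by rw [h]; simp
  simp only [Finset.mem_insert, Finset.mem_singleton] at hp hq ha hb
  omega

lemma star_arith (n p q : ℕ) (hn : 7 ≤ n) (hstar : StarCond n p q) :
    g n = p * q ∧ Nat.Coprime p q := by
  obtain ⟨hpq, hcase⟩ := hstar
  rcases hcase with ⟨h2, hset⟩ | ⟨h4, hset⟩ | ⟨h4, hset⟩
  · obtain ⟨t, ht⟩ : ∃ t, n = 2 * t + 1 := ⟨n / 2, by omega⟩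
    have ha : (n + 1) / 2 = t + 1 := by omega
    have hb : (n - 1) / 2 = t := by omega
    rw [ha, hb] at hset
    have hsq : n ^ 2 = 4 * (t * t) + 4 * t + 1 := by subst ht; ring
    have hprod : (t + 1) * t = t * t + t := by ring
    have hprod2 : t * (t + 1) = t * t + t := by ring
    have hg : g n = (t + 1) * t := by simp only [g, if_pos h2]; omega
    have hcop : Nat.Coprime (t + 1) t := Nat.coprime_self_add_left.mpr (Nat.coprime_one_left t)
    rcases pair_cases hset with ⟨e1, e2⟩ | ⟨e1, e2⟩
    · subst e1; subst e2; exact ⟨hg, hcop⟩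
    · subst e1; subst e2; exact ⟨by omega, hcop.symm⟩
  · obtain ⟨u, hu⟩ : ∃ u, n = 4 * u + 8 := ⟨(n - 8) / 4, by omega⟩
    have ha : (n + 2) / 2 = 2 * u + 5 := by omega
    have hb : (n - 2) / 2 = 2 * u + 3 := by omega
    rw [ha, hb] at hset
    have hsq : n ^ 2 = 16 * (u * u) + 64 * u + 64 := by subst hu; ring
    have hprod : (2 * u + 5) * (2 * u + 3) = 4 * (u * u) + 16 * u + 15 := by ring
    have hprod2 : (2 * u + 3) * (2 * u + 5) = 4 * (u * u) + 16 * u + 15 := by ring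
    have hg : g n = 4 * (u * u) + 16 * u + 15 := by
      simp only [g, if_neg (by omega : ¬ n % 2 = 1), if_pos h4]; omega
    have hcop : Nat.Coprime (2 * u + 3) (2 * u + 5) :=
      coprime_odd_add_two (2 * u + 3) (by omega)
    rcases pair_cases hset with ⟨e1, e2⟩ | ⟨e1, e2⟩
    · subst e1; subst e2; exact ⟨by omega, hcop.symm⟩
    · subst e1; subst e2; exact ⟨by omega, hcop⟩
  · obtain ⟨u, hu⟩ : ∃ u, n = 4 * u + 10 := ⟨(n - 10) / 4, by omega⟩
    have ha : (n + 4) / 2 = 2 * u + 7 := by omega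
    have hb : (n - 4) / 2 = 2 * u + 3 := by omega
    rw [ha, hb] at hset
    have hsq : n ^ 2 = 16 * (u * u) + 80 * u + 100 := by subst hu; ring
    have hprod : (2 * u + 7) * (2 * u + 3) = 4 * (u * u) + 20 * u + 21 := by ring
    have hprod2 : (2 * u + 3) * (2 * u + 7) = 4 * (u * u) + 20 * u + 21 := by ring
    have hg : g n = 4 * (u * u) + 20 * u + 21 := by
      simp only [g, if_neg (by omega : ¬ n % 2 = 1), if_neg (by omega : ¬ n % 4 = 0)]; omega
    have hcop : Nat.Coprime (2 * u + 3) (2 * u + 7) :=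
      coprime_odd_add_four (2 * u + 3) (by omega)
    rcases pair_cases hset with ⟨e1, e2⟩ | ⟨e1, e2⟩
    · subst e1; subst e2; exact ⟨by omega, hcop.symm⟩
    · subst e1; subst e2; exact ⟨by omega, hcop⟩

theorem stmt_3 (n p q : ℕ) (hn : 7 ≤ n) (hp : 0 < p) (hq : 0 < q)
    (hstar : StarCond n p q) :
    g n = p * q ∧
    (∀ m : ℕ, 1 ≤ m → m ≤ p * q →
      IsZO ((Matrix.fromBlocks (Cmat p)
        (Matrix.single (⟨0, hp⟩ : Fin p) (⟨0, hq⟩ : Fin q) 1)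
        0 (Cmat q)) ^ m)) ∧
    ¬ IsZO ((Matrix.fromBlocks (Cmat p)
        (Matrix.single (⟨0, hp⟩ : Fin p) (⟨0, hq⟩ : Fin q) 1)
        0 (Cmat q)) ^ (p * q + 1)) := by
  obtain ⟨harith, hco⟩ := star_arith n p q hn hstar
  set E : Matrix (Fin p) (Fin q) ℕ :=
    Matrix.single (⟨0, hp⟩ : Fin p) (⟨0, hq⟩ : Fin q) 1 with hE
  refine ⟨harith, ?_, ?_⟩
  · intro m _ hm2 i j
    rw [fromBlocks_pow]
    cases i with
    | inl i =>
      cases j with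
      | inl j =>
        rw [Matrix.fromBlocks_apply₁₁, Cmat_pow p hp]
        split <;> simp
      | inr j =>
        rw [Matrix.fromBlocks_apply₁₂, hE, S_apply p q hp hq]
        refine Finset.card_le_one.mpr ?_
        intro k1 hk1 k2 hk2
        simp only [Finset.mem_filter, Finset.mem_range] at hk1 hk2
        rcases le_total k1 k2 with h | h
        · exact key_unique p q m hco hm2 (i : ℕ) (j : ℕ) hk1.1 hk2.1 h
            hk1.2.1 hk2.2.1 hk1.2.2 hk2.2.2
        · exact (key_unique p q m hco hm2 (i : ℕ) (j : ℕ) hk2.1 hk1.1 h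
            hk2.2.1 hk1.2.1 hk2.2.2 hk1.2.2).symm
    | inr i =>
      cases j with
      | inl j => simp [Matrix.fromBlocks_apply₂₁]
      | inr j =>
        rw [Matrix.fromBlocks_apply₂₂, Cmat_pow q hq]
        split <;> simp
  · intro hzo
    have hkey := hzo (Sum.inl (⟨0, hp⟩ : Fin p)) (Sum.inr (⟨0, hq⟩ : Fin q))
    rw [fromBlocks_pow, Matrix.fromBlocks_apply₁₂, hE, S_apply p q hp hq] at hkey
    have hmem0 : 0 ∈ (Finset.range (p * q + 1)).filter
        (fun k => (((⟨0, hp⟩ : Fin p) : ℕ) + k) % p = 0 ∧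
          (((⟨0, hq⟩ : Fin q) : ℕ)) = (p * q + 1 - 1 - k) % q) := by
      simp only [Finset.mem_filter, Finset.mem_range]
      refine ⟨by omega, by simp, ?_⟩
      simp [Nat.mul_mod_left]
    have hmempq : p * q ∈ (Finset.range (p * q + 1)).filter
        (fun k => (((⟨0, hp⟩ : Fin p) : ℕ) + k) % p = 0 ∧
          (((⟨0, hq⟩ : Fin q) : ℕ)) = (p * q + 1 - 1 - k) % q) := by
      simp only [Finset.mem_filter, Finset.mem_range]
      refine ⟨by omega, ?_, ?_⟩
      · simp [Nat.mul_mod_right]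
      · simp
    have h2 : 1 < ((Finset.range (p * q + 1)).filter
        (fun k => (((⟨0, hp⟩ : Fin p) : ℕ) + k) % p = 0 ∧
          (((⟨0, hq⟩ : Fin q) : ℕ)) = (p * q + 1 - 1 - k) % q)).card :=
      Finset.one_lt_card.mpr ⟨0, hmem0, p * q, hmempq,
        by have := Nat.mul_pos hp hq; omega⟩
    omega
end

section
/- Let n ≥ 2 and let A be an n×n irreducible 0-1 matrix that is not permutation similar to the basic circulant matrix C_n. Then θ(A) ≤ n; that is, there exists a positive integer m ≤ n such that A^{m+1} is not a 0-1 matrix. -/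
/-!
If some row `i` of `A` has positive entries at two indices `a ≠ b`, take a shortest walk `P` from
`b` to `i` and a shortest walk `Q` from `a` to the vertex set of `P`, ending at `w`. The walks
`a ⇝ w ⇝ i → b ⇝ w` and `b ⇝ w ⇝ i → a ⇝ w` (along `Q` and `P`) both have length
`m = |Q| + |P| + 1`, so `(A ^ (m + 1)) i w ≥ 2`; and `m ≤ n` because the vertices of `P` and the
vertices of `Q` before `w` are pairwise distinct. Otherwise every row of `A` has a single entry `1`,
so `A` is the matrix of a map `σ` with a single orbit, i.e. of an `n`-cycle; every `n`-cycle is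
conjugate to `finRotate n`, whose matrix is `C_n`.
-/

theorem add_card_le_card_of_injOn {ι : Type*} [Fintype ι] {u : ℕ → ι} {t : ℕ} {P : Finset ι}
    (hu : Set.InjOn u (Set.Iio t)) (hfresh : ∀ s < t, u s ∉ P) :
    t + P.card ≤ Fintype.card ι := by
  classical
  have hQ : ((Finset.range t).image u).card = t := by
    rw [Finset.card_image_of_injOn (by simpa using hu), Finset.card_range]
  have hdisj : Disjoint ((Finset.range t).image u) P := by
    simp only [Finset.disjoint_left, Finset.mem_image, Finset.mem_range]
    rintro _ ⟨k, hk, rfl⟩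
    exact hfresh k hk
  rw [← hQ, ← Finset.card_union_of_disjoint hdisj]
  exact Finset.card_le_univ _

namespace Matrix

variable {ι : Type*} [Fintype ι] [DecidableEq ι] {A : Matrix ι ι ℕ}

theorem pow_add_apply_pos {s t : ℕ} {x z : ι} (y : ι) (hxy : 0 < (A ^ s) x y)
    (hyz : 0 < (A ^ t) y z) : 0 < (A ^ (s + t)) x z := by
  rw [pow_add, mul_apply]
  exact Finset.sum_pos' (fun _ _ => Nat.zero_le _) ⟨y, Finset.mem_univ y, Nat.mul_pos hxy hyz⟩

theorem two_le_pow_succ_apply {i a b w : ι} {m : ℕ} (hab : a ≠ b) (ha : 0 < A i a)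
    (hb : 0 < A i b) (haw : 0 < (A ^ m) a w) (hbw : 0 < (A ^ m) b w) :
    2 ≤ (A ^ (m + 1)) i w := by
  rw [pow_succ', mul_apply]
  calc 2 ≤ A i a * (A ^ m) a w + A i b * (A ^ m) b w := by
        have := Nat.mul_pos ha haw; have := Nat.mul_pos hb hbw; omega
    _ = ∑ v ∈ {a, b}, A i v * (A ^ m) v w := by rw [Finset.sum_pair hab]
    _ ≤ ∑ v, A i v * (A ^ m) v w := Finset.sum_le_sum_of_subset (Finset.subset_univ _)

theorem exists_pos_of_pow_apply_pos {k : ℕ} {i j : ι} (hk : 0 < k) (h : 0 < (A ^ k) i j) :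
    ∃ v, 0 < A i v := by
  obtain ⟨k, rfl⟩ := Nat.exists_eq_add_of_lt hk
  rw [pow_succ', mul_apply, Finset.sum_pos_iff] at h
  obtain ⟨v, -, hv⟩ := h
  exact ⟨v, (CanonicallyOrderedAdd.mul_pos.mp hv).1⟩

def IsWalk (A : Matrix ι ι ℕ) (c : ℕ → ι) (t : ℕ) : Prop := ∀ s < t, 0 < A (c s) (c (s + 1))

theorem exists_isWalk_of_pow_apply_pos {t : ℕ} {x y : ι} (h : 0 < (A ^ t) x y) :
    ∃ c : ℕ → ι, c 0 = x ∧ c t = y ∧ IsWalk A c t := by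
  induction t generalizing x with
  | zero =>
    rw [pow_zero, one_apply] at h
    exact ⟨fun _ => x, rfl, by split_ifs at h <;> simp_all, fun s hs => absurd hs s.not_lt_zero⟩
  | succ t ih =>
    rw [pow_succ', mul_apply, Finset.sum_pos_iff] at h
    obtain ⟨u, -, hu⟩ := h
    obtain ⟨hxu, huy⟩ := CanonicallyOrderedAdd.mul_pos.mp hu
    obtain ⟨c, hc0, hct, hc⟩ := ih huy
    refine ⟨fun | 0 => x | s + 1 => c s, rfl, hct, ?_⟩
    rintro (_ | s) hs
    · simpa [hc0] using hxu
    · exact hc s (by omega)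

theorem IsWalk.pow_sub_apply_pos {c : ℕ → ι} {t : ℕ} (hc : IsWalk A c t) {s₁ s₂ : ℕ}
    (h₁₂ : s₁ ≤ s₂) (h₂ : s₂ ≤ t) : 0 < (A ^ (s₂ - s₁)) (c s₁) (c s₂) := by
  obtain ⟨k, rfl⟩ := Nat.exists_eq_add_of_le h₁₂
  rw [Nat.add_sub_cancel_left]
  induction k with
  | zero => simp
  | succ k ih =>
    rw [← add_assoc]
    exact pow_add_apply_pos _ (ih (by omega) (by omega)) (by simpa using hc _ (by omega))

theorem exists_shortest_isWalk_to {x : ι} {S : Finset ι} (h : ∃ k, ∃ y ∈ S, 0 < (A ^ k) x y) :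
    ∃ t c, c 0 = x ∧ c t ∈ S ∧ IsWalk A c t ∧ Set.InjOn c (Set.Iic t) ∧
      ∀ s < t, c s ∉ S := by
  obtain ⟨y, hyS, hy⟩ := Nat.find_spec h
  obtain ⟨c, hc0, hct, hc⟩ := exists_isWalk_of_pow_apply_pos hy
  set t := Nat.find h
  have no_shortcut : ∀ s₁ s₂, s₁ ≤ s₂ → s₂ ≤ t → c s₁ = c s₂ → s₂ ≤ s₁ := by
    intro s₁ s₂ h₁₂ h₂ heq
    have hx := hc.pow_sub_apply_pos (Nat.zero_le s₁) (h₁₂.trans h₂)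
    have hy := hc.pow_sub_apply_pos h₂ le_rfl
    rw [hc0, Nat.sub_zero, heq] at hx
    have := Nat.find_min' h ⟨c t, hct ▸ hyS, pow_add_apply_pos _ hx hy⟩
    omega
  refine ⟨t, c, hc0, hct ▸ hyS, hc, fun s₁ h₁ s₂ h₂ heq => ?_, fun s hs hsS => ?_⟩
  · rcases le_total s₁ s₂ with h₁₂ | h₂₁
    · exact le_antisymm h₁₂ (no_shortcut s₁ s₂ h₁₂ h₂ heq)
    · exact le_antisymm (no_shortcut s₂ s₁ h₂₁ h₁ heq.symm) h₂₁
  · have hx := hc.pow_sub_apply_pos (Nat.zero_le s) hs.le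
    rw [hc0, Nat.sub_zero] at hx
    exact absurd (Nat.find_min' h ⟨c s, hsS, hx⟩) (not_le.mpr hs)

theorem exists_two_le_pow_succ_apply_of_ne {i a b : ι} (hab : a ≠ b) (ha : 0 < A i a)
    (hb : 0 < A i b) (hai : ∃ k, 0 < (A ^ k) a i) (hbi : ∃ k, 0 < (A ^ k) b i) :
    ∃ m w, 1 ≤ m ∧ m ≤ Fintype.card ι ∧ 2 ≤ (A ^ (m + 1)) i w := by
  obtain ⟨d, z, hz0, hzd, hz, hzinj, -⟩ :=
    exists_shortest_isWalk_to (S := {i}) (by simpa using hbi)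
  rw [Finset.mem_singleton] at hzd
  set P := (Finset.range (d + 1)).image z
  obtain ⟨t, u, hu0, hut, hu, huinj, hufresh⟩ := exists_shortest_isWalk_to (S := P)
    (hai.imp fun k hk => ⟨i, Finset.mem_image.mpr ⟨d, by simp, hzd⟩, hk⟩)
  obtain ⟨s, hs, hzs⟩ := Finset.mem_image.mp hut
  rw [Finset.mem_range] at hs
  have hP : P.card = d + 1 := by
    rw [Finset.card_image_of_injOn (hzinj.mono fun k hk => by simp at hk ⊢; omega),
      Finset.card_range]
  have hcard := add_card_le_card_of_injOn (huinj.mono Set.Iio_subset_Iic_self) hufresh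
  have haw : 0 < (A ^ t) a (u t) := by simpa [hu0] using hu.pow_sub_apply_pos t.zero_le le_rfl
  have hbw : 0 < (A ^ s) b (u t) := by
    simpa [hz0, hzs] using hz.pow_sub_apply_pos s.zero_le (by omega)
  have hwi : 0 < (A ^ (d - s)) (u t) i := by
    simpa [hzd, hzs] using hz.pow_sub_apply_pos (by omega : s ≤ d) le_rfl
  refine ⟨t + d + 1, u t, by omega, by omega, two_le_pow_succ_apply hab ha hb ?_ ?_⟩
  · rw [show t + d + 1 = t + (d - s) + 1 + s by omega]
    exact pow_add_apply_pos b (pow_add_apply_pos i (pow_add_apply_pos _ haw hwi)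
      (by rwa [pow_one])) hbw
  · rw [show t + d + 1 = s + (d - s) + 1 + t by omega]
    exact pow_add_apply_pos a (pow_add_apply_pos i (pow_add_apply_pos _ hbw hwi)
      (by rwa [pow_one])) haw

theorem pow_apply_eq_ite_iterate {σ : ι → ι} (hσ : ∀ i j, A i j = if j = σ i then 1 else 0)
    (k : ℕ) (i j : ι) : (A ^ k) i j = if j = σ^[k] i then 1 else 0 := by
  induction k generalizing j with
  | zero => simp [one_apply, eq_comm]
  | succ k ih =>
    simp only [pow_succ, mul_apply, ih, ite_mul, one_mul, zero_mul, Finset.sum_ite_eq',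
      Finset.mem_univ, if_true, hσ, Function.iterate_succ_apply']

end Matrix

theorem IsZO.exists_eq_ite {ι : Type*} [DecidableEq ι] {A : Matrix ι ι ℕ} (hA : IsZO A)
    (h : ∀ i, ∃! j, 0 < A i j) : ∃ σ : ι → ι, ∀ i j, A i j = if j = σ i then 1 else 0 := by
  choose σ hσ huniq using h
  refine ⟨σ, fun i j => ?_⟩
  split_ifs with hj
  · exact hj ▸ le_antisymm (hA _ _) (hσ i)
  · by_contra hne
    exact hj (huniq i j (Nat.pos_of_ne_zero hne))

theorem Cmat_apply {n : ℕ} (i j : Fin n) : Cmat n i j = if j = finRotate n i then 1 else 0 := by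
  cases n with
  | zero => exact i.elim0
  | succ n => simp [Cmat, finRotate_apply, Fin.ext_iff, Fin.val_add]

theorem exists_perm_semiconj_finRotate {n : ℕ} (hn : 2 ≤ n) {σ : Fin n → Fin n}
    (h : ∀ i j, ∃ k, 0 < k ∧ σ^[k] i = j) :
    ∃ e : Equiv.Perm (Fin n), Function.Semiconj e σ (finRotate n) := by
  have hsurj : Function.Surjective σ := fun j => by
    obtain ⟨k, hk, hkj⟩ := h j j
    obtain ⟨k, rfl⟩ := Nat.exists_eq_succ_of_ne_zero hk.ne'
    exact ⟨σ^[k] j, by rwa [← Function.iterate_succ_apply' σ]⟩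
  set τ : Equiv.Perm (Fin n) :=
    Equiv.ofBijective σ ⟨Finite.injective_iff_surjective.mpr hsurj, hsurj⟩
  have hmoved : ∀ i, τ i ≠ i := fun i hi => by
    have : Nontrivial (Fin n) := Fin.nontrivial_iff_two_le.mpr hn
    obtain ⟨j, hji⟩ := exists_ne i
    obtain ⟨k, -, hk⟩ := h i j
    exact hji (hk ▸ Function.iterate_fixed hi k)
  have hτ : τ.IsCycle := ⟨⟨0, by omega⟩, hmoved _, fun j _ => by
    obtain ⟨k, -, hk⟩ := h ⟨0, by omega⟩ j
    exact ⟨k, by rw [zpow_natCast, Equiv.Perm.coe_pow]; exact hk⟩⟩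
  have hsupp : τ.support = Finset.univ :=
    Finset.eq_univ_of_forall fun i => Equiv.Perm.mem_support.mpr (hmoved i)
  have hconj : IsConj τ (finRotate n) := Equiv.Perm.isConj_iff_cycleType_eq.mpr <| by
    rw [hτ.cycleType, hsupp, Finset.card_univ, Fintype.card_fin, cycleType_finRotate_of_le hn]
  obtain ⟨e, he⟩ := isConj_iff.mp hconj
  exact ⟨e, fun i => by rw [← he]; simp; rfl⟩

theorem exists_perm_eq_submatrix_Cmat {n : ℕ} (hn : 2 ≤ n) {A : Matrix (Fin n) (Fin n) ℕ}
    (hA : IsZO A) (hirr : ∀ i j, ∃ k, 0 < k ∧ 0 < (A ^ k) i j) (hrow : ∀ i, ∃! j, 0 < A i j) :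
    ∃ e : Equiv.Perm (Fin n), A = (Cmat n).submatrix e e := by
  obtain ⟨σ, hσ⟩ := hA.exists_eq_ite hrow
  obtain ⟨e, he⟩ := exists_perm_semiconj_finRotate hn (σ := σ) fun i j => by
    obtain ⟨k, hk, hij⟩ := hirr i j
    rw [Matrix.pow_apply_eq_ite_iterate hσ] at hij
    exact ⟨k, hk, by simpa [eq_comm, pos_iff_ne_zero] using hij⟩
  exact ⟨e, Matrix.ext fun i j => by
    simp only [Matrix.submatrix_apply, hσ, Cmat_apply, ← he.eq, e.injective.eq_iff]⟩

theorem stmt_6 (n : ℕ) (hn : 2 ≤ n) (A : Matrix (Fin n) (Fin n) ℕ)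
    (hA : IsZO A)
    (hirr : ∀ i j : Fin n, ∃ k : ℕ, 0 < k ∧ 0 < (A ^ k) i j)
    (hnc : ¬ ∃ e : Equiv.Perm (Fin n), A = (Cmat n).submatrix e e) :
    ∃ m : ℕ, 1 ≤ m ∧ m ≤ n ∧ ¬ IsZO (A ^ (m + 1)) := by
  by_cases hbranch : ∃ i a b, a ≠ b ∧ 0 < A i a ∧ 0 < A i b
  · obtain ⟨i, a, b, hab, ha, hb⟩ := hbranch
    obtain ⟨m, w, hm, hmn, hw⟩ := Matrix.exists_two_le_pow_succ_apply_of_ne hab ha hb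
      ((hirr a i).imp fun _ => And.right) ((hirr b i).imp fun _ => And.right)
    exact ⟨m, hm, by simpa using hmn, fun h => absurd (h i w) (by omega)⟩
  · push Not at hbranch
    have hrow : ∀ i, ∃! j, 0 < A i j := fun i => by
      obtain ⟨k, hk, hik⟩ := hirr i i
      obtain ⟨j, hj⟩ := Matrix.exists_pos_of_pow_apply_pos hk hik
      exact ⟨j, hj, fun j' hj' => by_contra fun hne => not_lt_of_ge (hbranch i j' j hne hj') hj⟩
    exact (hnc (exists_perm_eq_submatrix_Cmat hn hA hirr hrow)).elim
end

section
/- Let m and n be relatively prime positive integers. Then for any indices 1 ≤ i ≤ m and 1 ≤ j ≤ n, the sum Σ_{k=0}^{mn−1} (C_m)^k · E_{ij} · (C_n)^{mn−k−1} equals the m×n all-ones matrix J_{m×n}. -/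
lemma cmat_pow_apply {n : ℕ} (k : ℕ) (a b : Fin n) :
    (Cmat n ^ k) a b = if (b : ℕ) = ((a : ℕ) + k) % n then 1 else 0 := by
  induction k generalizing b with
  | zero =>
    simp [Matrix.one_apply, Fin.ext_iff, Nat.mod_eq_of_lt a.isLt, eq_comm]
  | succ k ih =>
    rw [pow_succ, Matrix.mul_apply]
    have hn : 0 < n := a.pos
    rw [Finset.sum_eq_single (⟨((a : ℕ) + k) % n, Nat.mod_lt _ hn⟩ : Fin n)]
    · rw [ih, if_pos rfl, one_mul]
      simp only [Cmat, Matrix.of_apply]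
      rw [Nat.mod_add_mod, Nat.add_assoc]
    · intro c _ hc
      rw [ih, if_neg, zero_mul]
      intro hcv
      exact hc (Fin.ext hcv)
    · simp

lemma prod_entry {m n : ℕ} (i a : Fin m) (j b : Fin n) (k t : ℕ) :
    (((Cmat m) ^ k * Matrix.single i j 1 : Matrix (Fin m) (Fin n) ℕ) *
        (Cmat n) ^ t) a b
      = if ((i : ℕ) = ((a : ℕ) + k) % m ∧ (b : ℕ) = ((j : ℕ) + t) % n) then 1 else 0 := by
  rw [Matrix.mul_apply]
  rw [Finset.sum_eq_single j]
  · rw [Matrix.mul_apply, Finset.sum_eq_single i]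
    · rw [cmat_pow_apply, cmat_pow_apply]
      simp [Matrix.single, ite_and, mul_comm]
      split <;> simp
    · intro c _ hc
      simp [Matrix.single, hc.symm]
    · simp
  · intro d _ hd
    rw [Matrix.mul_apply]
    simp [Matrix.single, hd.symm]
  · simp

theorem stmt_7 (m n : ℕ) (hm : 0 < m) (hn : 0 < n) (h : Nat.Coprime m n)
    (i : Fin m) (j : Fin n) :
    ∑ k ∈ Finset.range (m * n),
        ((Cmat m) ^ k * Matrix.single i j 1 : Matrix (Fin m) (Fin n) ℕ) *
          (Cmat n) ^ (m * n - k - 1)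
      = Matrix.of fun _ _ => (1 : ℕ) := by
  ext a b
  rw [Matrix.sum_apply]
  rw [Finset.sum_congr rfl (fun k _ => prod_entry i a j b k (m * n - k - 1))]
  simp only [Matrix.of_apply]
  -- abbreviations
  have ha : (a : ℕ) < m := a.isLt
  have hi : (i : ℕ) < m := i.isLt
  have hb : (b : ℕ) < n := b.isLt
  have hj : (j : ℕ) < n := j.isLt
  have hnN : n ≤ m * n := Nat.le_mul_of_pos_left n hm
  set N := m * n with hNdef
  have hN : 0 < N := Nat.mul_pos hm hn
  set r1 : ℕ := (i : ℕ) + (m - (a : ℕ)) with hr1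
  set r2 : ℕ := (j : ℕ) + (N - 1 - (b : ℕ)) with hr2
  have modeq_iff : ∀ {p u v : ℕ}, u < p → (u = v % p ↔ u ≡ v [MOD p]) := by
    intro p u v hu
    unfold Nat.ModEq
    rw [Nat.mod_eq_of_lt hu]
  -- characterize condition 1
  have hA : ∀ k : ℕ, ((i : ℕ) = ((a : ℕ) + k) % m ↔ k ≡ r1 [MOD m]) := by
    intro k
    have e1 : (a : ℕ) + r1 = (i : ℕ) + m := by omega
    rw [modeq_iff hi]
    have hmodim : (i : ℕ) ≡ (i : ℕ) + m [MOD m] := by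
      unfold Nat.ModEq; rw [Nat.add_mod_right]
    constructor
    · intro hk
      have h2 : (a : ℕ) + k ≡ (i : ℕ) + m [MOD m] := hk.symm.trans hmodim
      rw [← e1] at h2
      exact Nat.ModEq.add_left_cancel' _ h2
    · intro hk
      have h2 := hk.add_left (a : ℕ)
      rw [e1] at h2
      exact (h2.trans hmodim.symm).symm
  -- characterize condition 2
  have hB : ∀ k : ℕ, k < N → ((b : ℕ) = ((j : ℕ) + (N - k - 1)) % n ↔ k ≡ r2 [MOD n]) := by
    intro k hk
    have e2 : (j : ℕ) + (N - k - 1) + k = (b : ℕ) + r2 := by omega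
    rw [modeq_iff hb]
    constructor
    · intro hbk
      have h2 := hbk.add_right k
      rw [e2] at h2
      exact Nat.ModEq.add_left_cancel' _ h2
    · intro hk2
      have h2 := hk2.add_left (b : ℕ)
      rw [← e2] at h2
      exact Nat.ModEq.add_right_cancel' _ h2
  -- CRT solution
  obtain ⟨k0, hk0m, hk0n⟩ := Nat.chineseRemainder h r1 r2
  have hk0lt : k0 % N < N := Nat.mod_lt _ hN
  have hk0m' : k0 % N ≡ r1 [MOD m] := by
    refine Nat.ModEq.trans ?_ hk0m
    exact (Nat.ModEq.of_mul_right n (Nat.mod_modEq k0 N))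
  have hk0n' : k0 % N ≡ r2 [MOD n] := by
    refine Nat.ModEq.trans ?_ hk0n
    exact (Nat.ModEq.of_mul_left m (Nat.mod_modEq k0 N))
  -- the unique k
  have key : ∀ k : ℕ, k < N →
      (((i : ℕ) = ((a : ℕ) + k) % m ∧ (b : ℕ) = ((j : ℕ) + (N - k - 1)) % n) ↔ k = k0 % N) := by
    intro k hk
    rw [hA k, hB k hk]
    constructor
    · rintro ⟨h1, h2⟩
      have hm' : k ≡ k0 % N [MOD m] := h1.trans hk0m'.symm
      have hn' : k ≡ k0 % N [MOD n] := h2.trans hk0n'.symm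
      have : k ≡ k0 % N [MOD m * n] :=
        (Nat.modEq_and_modEq_iff_modEq_mul h).mp ⟨hm', hn'⟩
      have : k % N = (k0 % N) % N := this
      rwa [Nat.mod_eq_of_lt hk, Nat.mod_eq_of_lt hk0lt] at this
    · rintro rfl
      exact ⟨hk0m', hk0n'⟩
  calc ∑ k ∈ Finset.range N,
        (if ((i : ℕ) = ((a : ℕ) + k) % m ∧ (b : ℕ) = ((j : ℕ) + (N - k - 1)) % n) then 1 else 0)
      = ∑ k ∈ Finset.range N, (if k = k0 % N then 1 else 0) := by
        refine Finset.sum_congr rfl fun k hk => ?_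
        exact if_congr (key k (Finset.mem_range.mp hk)) rfl rfl
    _ = 1 := by
        rw [Finset.sum_ite_eq' (Finset.range N) (k0 % N) (fun _ => 1)]
        · simp [Finset.mem_range.mpr hk0lt]
end

section
/- Let n ≥ 7 and let p, q be positive integers with p + q = n. Let B be the n×n block matrix [[C_p, X],[0, C_q]] where X is a nonzero p×q 0-1 matrix. Then B has finite stable index and θ(B) ≤ g(n). -/
/-!
Let `L = lcm p q`. Since `C_p ^ L = 1` and `C_q ^ L = 1`, the upper right block of
`B ^ (L + 1) = ∑_{i ≤ L} C_p ^ i X C_q ^ (L - i)` contains `X` twice (from `i = 0` and `i = L`),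
so a nonzero entry of `X` makes `B ^ (L + 1)` leave the 0-1 matrices and `θ(B) ≤ L`.
It remains to see `L ≤ g(n)`. If `p = q` then `L = p`. Otherwise `4 L ≤ 4 p q = n ^ 2 - (p - q) ^ 2`,
and `|p - q| ≡ n (mod 2)` gives `(p - q) ^ 2 ≥ 1, 4, 16` in the three cases defining `g`, except
when `|p - q| = 2` and `n ≡ 2 (mod 4)`; then `p` and `q` are even, so `2 L ≤ p q`.
-/

lemma Matrix.permMatrix_pow {n R : Type*} [DecidableEq n] [Fintype n] [Semiring R]
    (σ : Equiv.Perm n) (k : ℕ) : (σ ^ k).permMatrix R = σ.permMatrix R ^ k := by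
  induction k with
  | zero => simp
  | succ k ih => rw [pow_succ, Matrix.permMatrix_mul, ih, pow_succ']

open Fin.NatCast in
lemma finRotate_pow_apply {n : ℕ} [NeZero n] (k : ℕ) (i : Fin n) :
    (finRotate n ^ k) i = i + k := by
  induction k with
  | zero => simp
  | succ k ih =>
    rw [pow_succ', Equiv.Perm.mul_apply, ih, finRotate_apply, Nat.cast_succ, add_assoc]

lemma finRotate_pow_self (n : ℕ) : finRotate n ^ n = 1 := by
  rcases Nat.eq_zero_or_pos n with rfl | hn
  · rfl
  · have := NeZero.of_pos hn
    exact Equiv.ext fun i => by simp [finRotate_pow_apply]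

lemma Cmat_eq_permMatrix (n : ℕ) : Cmat n = (finRotate n).permMatrix ℕ := by
  ext i j
  have := i.neZero
  simp [Cmat, PEquiv.toMatrix_apply, Fin.ext_iff, Fin.val_add, eq_comm]

lemma Cmat_pow_eq_one_of_dvd {n m : ℕ} (h : n ∣ m) : Cmat n ^ m = 1 := by
  obtain ⟨t, rfl⟩ := h
  rw [pow_mul, Cmat_eq_permMatrix, ← Matrix.permMatrix_pow, finRotate_pow_self]
  simp

namespace Matrix

variable {m n R : Type*} [Fintype m] [Fintype n] [DecidableEq m] [DecidableEq n] [Semiring R]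

lemma fromBlocks_zero₂₁_pow (A : Matrix m m R) (X : Matrix m n R) (D : Matrix n n R) (k : ℕ) :
    fromBlocks A X 0 D ^ k =
      fromBlocks (A ^ k) (∑ i ∈ Finset.range k, A ^ i * X * D ^ (k - 1 - i)) 0 (D ^ k) := by
  induction k with
  | zero => simp [fromBlocks_one]
  | succ k ih =>
    have hsum : A ^ k * X + (∑ i ∈ Finset.range k, A ^ i * X * D ^ (k - 1 - i)) * D =
        ∑ i ∈ Finset.range (k + 1), A ^ i * X * D ^ (k - i) := by
      rw [Finset.sum_range_succ, Nat.sub_self, pow_zero, Matrix.mul_one, Matrix.sum_mul, add_comm]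
      congr 1
      refine Finset.sum_congr rfl fun i hi => ?_
      have hi : i < k := Finset.mem_range.1 hi
      rw [Matrix.mul_assoc, ← pow_succ, show k - 1 - i + 1 = k - i by omega]
    rw [pow_succ, ih, fromBlocks_multiply]
    simpa [← pow_succ] using hsum

lemma add_le_fromBlocks_pow_succ_apply [PartialOrder R] [CanonicallyOrderedAdd R]
    {A : Matrix m m R} {D : Matrix n n R} (X : Matrix m n R) {L : ℕ} (hL : 0 < L)
    (hA : A ^ L = 1) (hD : D ^ L = 1) (a : m) (b : n) :
    X a b + X a b ≤ (fromBlocks A X 0 D ^ (L + 1)) (Sum.inl a) (Sum.inr b) := by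
  rw [fromBlocks_zero₂₁_pow, fromBlocks_apply₁₂, Matrix.sum_apply]
  calc X a b + X a b = ∑ i ∈ {0, L}, (A ^ i * X * D ^ (L + 1 - 1 - i)) a b := by
        simp [Finset.sum_pair hL.ne, hA, hD]
    _ ≤ _ := Finset.sum_le_sum_of_subset fun i hi => by
        simp only [Finset.mem_insert, Finset.mem_singleton] at hi
        simp only [Finset.mem_range]
        omega

end Matrix

lemma theta_le_of_not_isZO {α : Type*} [Fintype α] [DecidableEq α] {A : Matrix α α ℕ} {k : ℕ}
    (hk : 1 ≤ k) (h : ¬ IsZO (A ^ (k + 1))) : theta A ≤ k :=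
  sInf_le ⟨k, ⟨hk, h⟩, rfl⟩

lemma lcm_le_g_of_le {p q : ℕ} (hp : 0 < p) (hpq : p ≤ q) (hn : 7 ≤ p + q) :
    Nat.lcm p q ≤ g (p + q) := by
  obtain ⟨c, rfl⟩ := Nat.exists_eq_add_of_le hpq
  have hsq : (p + (p + c)) ^ 2 = 4 * (p * (p + c)) + c ^ 2 := by ring
  rcases Nat.eq_zero_or_pos c with rfl | hc
  · have : 4 * p + 16 ≤ (p + p) ^ 2 := by nlinarith
    rw [add_zero, Nat.lcm_self]
    unfold g
    split_ifs <;> omega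
  have hlcm := Nat.lcm_le_mul hp (by omega : 0 < p + c)
  unfold g
  split_ifs with hodd h4
  · have : 1 ≤ c ^ 2 := Nat.one_le_pow _ _ hc
    omega
  · have : 2 ^ 2 ≤ c ^ 2 := Nat.pow_le_pow_left (by omega) 2
    omega
  · rcases eq_or_ne c 2 with rfl | hc2
    · have hgcd : 2 ≤ Nat.gcd p (p + 2) :=
        Nat.le_of_dvd (Nat.gcd_pos_of_pos_left _ hp) (Nat.dvd_gcd (by omega) (by omega))
      have h2lcm : 2 * Nat.lcm p (p + 2) ≤ p * (p + 2) :=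
        Nat.gcd_mul_lcm p (p + 2) ▸ Nat.mul_le_mul_right _ hgcd
      have : 15 ≤ p * (p + 2) := Nat.mul_le_mul (by omega : 3 ≤ p) (by omega : 5 ≤ p + 2)
      omega
    · have : 4 ^ 2 ≤ c ^ 2 := Nat.pow_le_pow_left (by omega) 2
      omega

lemma lcm_le_g {p q : ℕ} (hp : 0 < p) (hq : 0 < q) (hn : 7 ≤ p + q) :
    Nat.lcm p q ≤ g (p + q) := by
  rcases le_total p q with h | h
  · exact lcm_le_g_of_le hp h hn
  · rw [Nat.lcm_comm, add_comm]
    exact lcm_le_g_of_le hq h (by omega)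

theorem stmt_9_general (p q : ℕ) (hp : 0 < p) (hq : 0 < q) (hn : 7 ≤ p + q)
    (X : Matrix (Fin p) (Fin q) ℕ) (hX0 : X ≠ 0) :
    theta (Matrix.fromBlocks (Cmat p) X 0 (Cmat q)) ≠ ⊤ ∧
    theta (Matrix.fromBlocks (Cmat p) X 0 (Cmat q)) ≤ (g (p + q) : ℕ∞) := by
  obtain ⟨a, b, hab⟩ : ∃ a b, X a b ≠ 0 := by
    contrapose! hX0
    exact Matrix.ext hX0
  have hdouble := Matrix.add_le_fromBlocks_pow_succ_apply X (Nat.lcm_pos hp hq)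
    (Cmat_pow_eq_one_of_dvd (Nat.dvd_lcm_left p q))
    (Cmat_pow_eq_one_of_dvd (Nat.dvd_lcm_right p q)) a b
  have hle : theta (Matrix.fromBlocks (Cmat p) X 0 (Cmat q)) ≤ Nat.lcm p q :=
    theta_le_of_not_isZO (Nat.lcm_pos hp hq) fun hzo => by
      have := hzo (Sum.inl a) (Sum.inr b)
      omega
  exact ⟨ne_top_of_le_ne_top (ENat.natCast_ne_top _) hle,
    hle.trans (by exact_mod_cast lcm_le_g hp hq hn)⟩

theorem stmt_9 (p q : ℕ) (hp : 0 < p) (hq : 0 < q) (hn : 7 ≤ p + q)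
    (X : Matrix (Fin p) (Fin q) ℕ) (hX : IsZO X) (hX0 : X ≠ 0) :
    theta (Matrix.fromBlocks (Cmat p) X 0 (Cmat q)) ≠ ⊤ ∧
    theta (Matrix.fromBlocks (Cmat p) X 0 (Cmat q)) ≤ (g (p + q) : ℕ∞) :=
  stmt_9_general p q hp hq hn X hX0
end

section
/- Let A be an n×n 0-1 matrix and let k be a positive integer such that A^k is a 0-1 matrix. Then every complex eigenvalue μ of A (viewing A as a complex matrix) satisfies |μ|^k ≤ n. -/
/-! By spectral mapping `μ ^ k` lies in the spectrum of `A ^ k`, so `‖μ‖ ^ k` is bounded by any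
submultiplicative norm of `A ^ k`; for the maximal row sum norm this is at most `n`, because
`A ^ k` is a 0-1 matrix. -/

attribute [local instance] Matrix.linftyOpSeminormedAddCommGroup Matrix.linftyOpNormedRing
  Matrix.linftyOpNormedAlgebra

open scoped NNReal

theorem IsZO.linfty_opNorm_map_natCast_le {m n 𝕜 : Type*} [Fintype m] [Fintype n]
    [SeminormedRing 𝕜] [NormOneClass 𝕜] {B : Matrix m n ℕ} (hB : IsZO B) :
    ‖B.map (Nat.cast : ℕ → 𝕜)‖ ≤ Fintype.card n := by
  rw [Matrix.linfty_opNorm_def, ← NNReal.coe_natCast, NNReal.coe_le_coe]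
  refine Finset.sup_le fun i _ => ?_
  calc ∑ j, ‖B.map (Nat.cast : ℕ → 𝕜) i j‖₊ ≤ ∑ _j : n, (1 : ℝ≥0) := by
        refine Finset.sum_le_sum fun j _ => ?_
        rcases Nat.le_one_iff_eq_zero_or_eq_one.mp (hB i j) with h | h <;> simp [h]
    _ = Fintype.card n := by simp

theorem spectrum.norm_pow_le_norm_pow_of_mem {𝕜 A : Type*} [NontriviallyNormedField 𝕜]
    [IsAlgClosed 𝕜] [NormedRing A] [NormedAlgebra 𝕜 A] [NormOneClass A] [CompleteSpace A]
    {a : A} {μ : 𝕜} (hμ : μ ∈ spectrum 𝕜 a) {k : ℕ}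
    (hk : 0 < k) : ‖μ‖ ^ k ≤ ‖a ^ k‖ := by
  have hμk : μ ^ k ∈ spectrum 𝕜 (a ^ k) := by
    rw [spectrum.map_pow_of_pos a hk]
    exact ⟨μ, hμ, rfl⟩
  simpa using spectrum.norm_le_norm_of_mem hμk

theorem stmt_12_general (n : ℕ) (A : Matrix (Fin n) (Fin n) ℕ)
    (k : ℕ) (hk : 0 < k) (hAk : IsZO (A ^ k)) (μ : ℂ)
    (hμ : μ ∈ spectrum ℂ (A.map (Nat.cast : ℕ → ℂ))) :
    ‖μ‖ ^ k ≤ (n : ℝ) := by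
  -- needed for `‖1‖ = 1`; over an empty index type the matrix algebra is trivial
  have : Nonempty (Fin n) := by
    by_contra hempty
    rw [not_nonempty_iff] at hempty
    simp [spectrum.of_subsingleton] at hμ
  calc ‖μ‖ ^ k ≤ ‖A.map (Nat.cast : ℕ → ℂ) ^ k‖ := spectrum.norm_pow_le_norm_pow_of_mem hμ hk
    _ = ‖(A ^ k).map (Nat.cast : ℕ → ℂ)‖ :=
      congrArg norm (Matrix.map_pow A (Nat.castRingHom ℂ) k).symm
    _ ≤ n := by simpa using hAk.linfty_opNorm_map_natCast_le

theorem stmt_12 (n : ℕ) (A : Matrix (Fin n) (Fin n) ℕ) (hA : IsZO A)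
    (k : ℕ) (hk : 0 < k) (hAk : IsZO (A ^ k)) (μ : ℂ)
    (hμ : μ ∈ spectrum ℂ (A.map (Nat.cast : ℕ → ℂ))) :
    ‖μ‖ ^ k ≤ (n : ℝ) :=
  stmt_12_general n A k hk hAk μ hμ
end

section
/- Let H be the 10×10 block matrix [[C_4, u, 0],[0, 0, vᵀ],[0, 0, C_5]], where u is a 0-1 column vector of length 4 with exactly one nonzero entry and v is a 0-1 column vector of length 5 with exactly one nonzero entry. Then θ(H) = 21 = g(10): the powers H, H², …, H^{21} are all 0-1 matrices, and H^{22} is not a 0-1 matrix. -/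
/-- The block matrix `[[C_p, u, 0], [0, 0, vᵀ], [0, 0, C_q]]`. -/
def Hmat (p q : ℕ) (u : Fin p → ℕ) (v : Fin q → ℕ) :
    Matrix (Fin p ⊕ Unit ⊕ Fin q) (Fin p ⊕ Unit ⊕ Fin q) ℕ :=
  Matrix.of fun i j =>
    match i, j with
    | Sum.inl a, Sum.inl b => Cmat p a b
    | Sum.inl a, Sum.inr (Sum.inl _) => u a
    | Sum.inr (Sum.inl _), Sum.inr (Sum.inr b) => v b
    | Sum.inr (Sum.inr a), Sum.inr (Sum.inr b) => Cmat q a b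
    | _, _ => 0

/-!
A walk in the digraph of `Hmat p q e_{a0} e_{b0}` either stays on one of the two cycles, where
walks of each length are unique, or goes round the `p`-cycle to `a0`, through the middle vertex
to `b0` and round the `q`-cycle. Walks of the last kind of length `m` from `a` to `d` correspond
to the `k < m - 1` with `k ≡ a0 - a (mod p)` and `m - 2 - k ≡ d - b0 (mod q)`; for coprime
`p, q` the Chinese remainder theorem leaves at most one such `k` while `m ≤ p q + 1`, and for
`m = p q + 2`, `a = a0`, `d = b0` both `k = 0` and `k = p q` qualify. Hence
`θ = p q + 1`, which is `21` for `(p, q) = (4, 5)`.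
-/

open Finset

variable {p q : ℕ}

theorem Fin.natCast_val_add_one [NeZero p] (a : Fin p) :
    (((a + 1 : Fin p) : ℕ) : ZMod p) = (a : ℕ) + 1 := by
  rw [Fin.val_add, ZMod.natCast_mod, Fin.val_one', Nat.cast_add, ZMod.natCast_mod, Nat.cast_one]

theorem Fin.natCast_zmod_inj {a b : Fin p} : ((a : ℕ) : ZMod p) = (b : ℕ) ↔ a = b := by
  rw [ZMod.natCast_eq_natCast_iff', Nat.mod_eq_of_lt a.isLt, Nat.mod_eq_of_lt b.isLt, Fin.val_inj]

theorem Cmat_apply_s16 [NeZero p] (a b : Fin p) : Cmat p a b = if b = a + 1 then 1 else 0 := by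
  simp only [Cmat, Matrix.of_apply, Fin.ext_iff, Fin.val_add, Fin.val_one', Nat.add_mod_mod]

section FirstStep

variable (u : Fin p → ℕ) (v : Fin q → ℕ)
  (M : Matrix (Fin p ⊕ Unit ⊕ Fin q) (Fin p ⊕ Unit ⊕ Fin q) ℕ) (j : Fin p ⊕ Unit ⊕ Fin q)

theorem Hmat_mul_apply_inl [NeZero p] (a : Fin p) :
    (Hmat p q u v * M) (.inl a) j = M (.inl (a + 1)) j + u a * M (.inr (.inl ())) j := by
  simp [Matrix.mul_apply, Hmat, Fintype.sum_sum_type, Cmat_apply_s16]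

theorem Hmat_mul_apply_unit :
    (Hmat p q u v * M) (.inr (.inl ())) j = ∑ b, v b * M (.inr (.inr b)) j := by
  simp [Matrix.mul_apply, Hmat, Fintype.sum_sum_type]

theorem Hmat_mul_apply_inr [NeZero q] (c : Fin q) :
    (Hmat p q u v * M) (.inr (.inr c)) j = M (.inr (.inr (c + 1))) j := by
  simp [Matrix.mul_apply, Hmat, Fintype.sum_sum_type, Cmat_apply_s16]

end FirstStep

/- Walks of length `m` from `a` to `d` run `k` steps round the `p`-cycle to `a0`, then through
the middle vertex to `b0`, then `m - 2 - k` steps round the `q`-cycle; `crossCount` counts the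
admissible `k`. -/
def crossCount (a0 : Fin p) (b0 : Fin q) (m : ℕ) (a : Fin p) (d : Fin q) : ℕ :=
  #{k ∈ range m | k + 2 ≤ m ∧ ((a : ℕ) + k : ZMod p) = (a0 : ℕ) ∧
    ((b0 : ℕ) + m : ZMod q) = (d : ℕ) + k + 2}

def HmatPowFormula (a0 : Fin p) (b0 : Fin q) (m : ℕ) :
    Matrix (Fin p ⊕ Unit ⊕ Fin q) (Fin p ⊕ Unit ⊕ Fin q) ℕ :=
  Matrix.of fun i j =>
    match i, j with
    | .inl a, .inl b => if ((b : ℕ) : ZMod p) = (a : ℕ) + m then 1 else 0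
    | .inl a, .inr (.inl _) =>
      if 1 ≤ m ∧ ((a : ℕ) + m : ZMod p) = (a0 : ℕ) + 1 then 1 else 0
    | .inl a, .inr (.inr d) => crossCount a0 b0 m a d
    | .inr (.inl _), .inr (.inl _) => if m = 0 then 1 else 0
    | .inr (.inl _), .inr (.inr d) =>
      if 1 ≤ m ∧ ((b0 : ℕ) + m : ZMod q) = (d : ℕ) + 1 then 1 else 0
    | .inr (.inr c), .inr (.inr d) => if ((d : ℕ) : ZMod q) = (c : ℕ) + m then 1 else 0
    | _, _ => 0

theorem crossCount_succ [NeZero p] (a0 : Fin p) (b0 : Fin q) (m : ℕ) (a : Fin p) (d : Fin q) :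
    crossCount a0 b0 (m + 1) a d = crossCount a0 b0 m (a + 1) d +
      if a = a0 ∧ 1 ≤ m ∧ ((b0 : ℕ) + m : ZMod q) = (d : ℕ) + 1 then 1 else 0 := by
  simp only [crossCount, card_filter, sum_range_succ', Fin.natCast_val_add_one]
  congr 1
  · refine sum_congr rfl fun k _ => if_congr ?_ rfl rfl
    push_cast
    constructor <;> rintro ⟨h1, h2, h3⟩ <;>
      exact ⟨by omega, by linear_combination h2, by linear_combination h3⟩
  · refine if_congr ?_ rfl rfl
    push_cast
    rw [add_zero, Fin.natCast_zmod_inj]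
    constructor <;> rintro ⟨h1, h2, h3⟩
    · exact ⟨h2, by omega, by linear_combination h3⟩
    · exact ⟨by omega, h1, by linear_combination h3⟩

theorem Hmat_single_pow [NeZero p] [NeZero q] (a0 : Fin p) (b0 : Fin q) (m : ℕ) :
    Hmat p q (Pi.single a0 1) (Pi.single b0 1) ^ m = HmatPowFormula a0 b0 m := by
  induction m with
  | zero =>
    ext (a | _ | c) (b | _ | d) <;>
      simp [HmatPowFormula, Matrix.one_apply, Fin.natCast_zmod_inj, eq_comm, crossCount]
  | succ m ih =>
    ext (a | _ | c) j
    · rw [pow_succ', Hmat_mul_apply_inl, ih]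
      rcases j with b | _ | d <;>
        simp only [HmatPowFormula, Matrix.of_apply, crossCount_succ, Fin.natCast_val_add_one,
          Pi.single_apply]
      · exact if_congr (by push_cast; ring_nf) rfl rfl
      · rcases m with _ | m
        · simp [Fin.natCast_zmod_inj]
        · push_cast
          simp only [true_and, mul_zero, add_zero]
          exact if_congr (by ring_nf) rfl rfl
      · rw [ite_zero_mul_ite_zero, mul_one]
    · rw [pow_succ', Hmat_mul_apply_unit, ih]
      rcases j with b | _ | d <;>
        simp only [HmatPowFormula, Matrix.of_apply, Pi.single_apply, ite_mul, one_mul, zero_mul,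
          sum_ite_eq', mem_univ, if_true, le_add_iff_nonneg_left, zero_le, true_and]
      · simp
      · exact if_congr (by push_cast; constructor <;> intro h <;> linear_combination -h) rfl rfl
    · rw [pow_succ', Hmat_mul_apply_inr, ih]
      rcases j with b | _ | d <;>
        simp only [HmatPowFormula, Matrix.of_apply, Fin.natCast_val_add_one]
      exact if_congr (by push_cast; ring_nf) rfl rfl

theorem crossCount_le_one {a0 : Fin p} {b0 : Fin q} {m : ℕ} (hpq : p.Coprime q)
    (hm : m ≤ p * q + 1) (a : Fin p) (d : Fin q) : crossCount a0 b0 m a d ≤ 1 := by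
  refine card_le_one.mpr fun k hk l hl => ?_
  simp only [mem_filter, mem_range] at hk hl
  obtain ⟨-, hk2, hka, hkd⟩ := hk
  obtain ⟨-, hl2, hla, hld⟩ := hl
  have hp : k ≡ l [MOD p] :=
    (ZMod.natCast_eq_natCast_iff _ _ _).mp (by linear_combination hka - hla)
  have hq : k ≡ l [MOD q] :=
    (ZMod.natCast_eq_natCast_iff _ _ _).mp (by linear_combination hld - hkd)
  have hpq : k ≡ l [MOD p * q] := (Nat.modEq_and_modEq_iff_modEq_mul hpq).mp ⟨hp, hq⟩
  exact hpq.eq_of_lt_of_lt (by omega) (by omega)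

theorem two_le_crossCount [NeZero p] [NeZero q] (a0 : Fin p) (b0 : Fin q) :
    2 ≤ crossCount a0 b0 (p * q + 2) a0 b0 := by
  have hpq : p * q ≠ 0 := mul_ne_zero (NeZero.ne p) (NeZero.ne q)
  calc 2 = #({0, p * q} : Finset ℕ) := (card_pair hpq.symm).symm
    _ ≤ crossCount a0 b0 (p * q + 2) a0 b0 := card_le_card fun k hk => by
      rcases mem_insert.mp hk with rfl | hk
      · simp
      · simp [mem_singleton.mp hk]

theorem theta_eq_of_isZO_pow {α : Type*} [Fintype α] [DecidableEq α] {A : Matrix α α ℕ} {k : ℕ}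
    (hk : 1 ≤ k) (hZO : ∀ m ≤ k, IsZO (A ^ m)) (hnot : ¬ IsZO (A ^ (k + 1))) :
    theta A = k := by
  refine le_antisymm (sInf_le ⟨k, ⟨hk, hnot⟩, rfl⟩) (le_sInf ?_)
  rintro _ ⟨l, ⟨-, hl⟩, rfl⟩
  have hkl : k ≤ l := by
    by_contra! h
    exact hl (hZO (l + 1) h)
  exact Nat.cast_le.mpr hkl

theorem exists_eq_piSingle_one {ι : Type*} [DecidableEq ι] {u : ι → ℕ} (hu1 : ∀ i, u i ≤ 1)
    (hu : ∃! i, u i ≠ 0) : ∃ i, u = Pi.single i 1 := by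
  obtain ⟨i, hi, huniq⟩ := hu
  refine ⟨i, funext fun j => ?_⟩
  by_cases hji : j = i
  · subst hji
    have := hu1 j
    simp only [Pi.single_eq_same]
    omega
  · rw [Pi.single_eq_of_ne hji]
    by_contra h
    exact hji (huniq j h)

theorem isZO_Hmat_single_pow [NeZero p] [NeZero q] (hpq : p.Coprime q) (a0 : Fin p) (b0 : Fin q)
    {m : ℕ} (hm : m ≤ p * q + 1) : IsZO (Hmat p q (Pi.single a0 1) (Pi.single b0 1) ^ m) := by
  rw [Hmat_single_pow]
  rintro (a | _ | c) (b | _ | d) <;> simp only [HmatPowFormula, Matrix.of_apply]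
  all_goals first
    | exact crossCount_le_one hpq hm a d
    | exact zero_le_one
    | exact ite_le_one le_rfl zero_le_one

theorem not_isZO_Hmat_single_pow [NeZero p] [NeZero q] (a0 : Fin p) (b0 : Fin q) :
    ¬ IsZO (Hmat p q (Pi.single a0 1) (Pi.single b0 1) ^ (p * q + 2)) := by
  intro h
  have h1 := h (.inl a0) (.inr (.inr b0))
  rw [Hmat_single_pow] at h1
  exact (two_le_crossCount a0 b0).not_gt (Nat.lt_succ_of_le h1)

theorem theta_Hmat_single [NeZero p] [NeZero q] (hpq : p.Coprime q) (a0 : Fin p) (b0 : Fin q) :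
    theta (Hmat p q (Pi.single a0 1) (Pi.single b0 1)) = (p * q + 1 : ℕ) :=
  theta_eq_of_isZO_pow (Nat.le_add_left 1 _) (fun _ hm => isZO_Hmat_single_pow hpq a0 b0 hm)
    (not_isZO_Hmat_single_pow a0 b0)

theorem stmt_16 (u : Fin 4 → ℕ) (v : Fin 5 → ℕ)
    (hu1 : ∀ a, u a ≤ 1) (hv1 : ∀ b, v b ≤ 1)
    (hu : ∃! a, u a ≠ 0) (hv : ∃! b, v b ≠ 0) :
    theta (Hmat 4 5 u v) = (21 : ℕ∞) ∧ g 10 = 21 ∧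
    (∀ m : ℕ, 1 ≤ m → m ≤ 21 → IsZO ((Hmat 4 5 u v) ^ m)) ∧
    ¬ IsZO ((Hmat 4 5 u v) ^ 22) := by
  obtain ⟨a0, rfl⟩ := exists_eq_piSingle_one hu1 hu
  obtain ⟨b0, rfl⟩ := exists_eq_piSingle_one hv1 hv
  have hcop : Nat.Coprime 4 5 := by norm_num
  exact ⟨theta_Hmat_single hcop a0 b0, by decide,
    fun _ _ hm => isZO_Hmat_single_pow hcop a0 b0 hm, not_isZO_Hmat_single_pow a0 b0⟩
end
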